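/- arXiv:1407.0192 — 2 statements merged into one kernel-verified Lean document; each statement's English description precedes it below -/
import Mathlib

section
/- Let g : ℝ → [0,∞) be a function with lim_{s→+∞} g(s)/s = +∞, and fix p > 1. For each integer m ≥ 1 define j_m : ℝ → ℝ by j_m(s) = g(s) for s ≤ m and j_m(s) = g(m) − m^p + s^p for s > m, and set j(s) = inf_{m ≥ 1} j_m(s). Then lim_{s→+∞} j(s)/s = +∞. -/
open MeasureTheory Metric Set Filter Topology

noncomputable section

abbrev Euc (N : ℕ) : Type := EuclideanSpace ℝ (Fin N)

variable {N : ℕ}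

/-- The Aubin–Talenti instanton `d(x) = (1 + |x|²)^{-(N-2)/2}`. -/
def instanton (N : ℕ) (x : Euc N) : ℝ := (1 + ‖x‖ ^ 2) ^ (-(((N : ℝ) - 2) / 2))

/-- `gu` is a weak gradient of `u` on `ℝ^N` (componentwise integration by parts
against smooth compactly supported test functions). -/
def IsWeakGradient (u : Euc N → ℝ) (gu : Euc N → Euc N) : Prop :=
  ∀ v : Euc N → ℝ, ContDiff ℝ (⊤ : ℕ∞) v → HasCompactSupport v → ∀ i : Fin N,
    ∫ x, u x * fderiv ℝ v x (EuclideanSpace.single i 1) = -∫ x, gu x i * v x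

/-- `u ∈ 𝓓^{1,2}(ℝ^N)`, with weak gradient `gu`. -/
def MemD12 (u : Euc N → ℝ) (gu : Euc N → Euc N) : Prop :=
  MemLp u (ENNReal.ofReal (2 * (N : ℝ) / ((N : ℝ) - 2))) volume ∧
    MemLp gu 2 volume ∧ IsWeakGradient u gu

/-- The `𝓓^{1,2}` norm `‖u‖ = (∫ |∇u|²)^{1/2}`, expressed through the weak gradient. -/
def d12Norm (gu : Euc N → Euc N) : ℝ := Real.sqrt (∫ x, ‖gu x‖ ^ 2)

/-- `u` (with weak gradient `gu`) is a weak solution of `-Δu = F` on `ℝ^N`. -/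
def IsWeakSolution (u : Euc N → ℝ) (gu : Euc N → Euc N) (F : Euc N → ℝ) : Prop :=
  ∀ v : Euc N → ℝ, ContDiff ℝ (⊤ : ℕ∞) v → HasCompactSupport v →
    ∫ x, (inner ℝ (gu x) (gradient v x) : ℝ) = ∫ x, F x * v x

/-- Hypothesis (Ha): `a` is positive and lies in `L^{N/2} ∩ L^∞`. -/
def Ha (a : Euc N → ℝ) : Prop :=
  (∀ x, 0 < a x) ∧ MemLp a (ENNReal.ofReal ((N : ℝ) / 2)) volume ∧ MemLp a ⊤ volume

/-- `λ₁ = inf { ‖u‖² / ∫ a u² : u ∈ 𝓓^{1,2}(ℝ^N) \ {0} }`. -/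
def lam1 (N : ℕ) (a : Euc N → ℝ) : ℝ :=
  sInf {r | ∃ (u : Euc N → ℝ) (gu : Euc N → Euc N), MemD12 u gu ∧
    ¬u =ᵐ[volume] (0 : Euc N → ℝ) ∧
    r = (∫ x, ‖gu x‖ ^ 2) / ∫ x, a x * u x ^ 2}

/-- `λ* = inf { ∫_{B₀} |∇u|² / ∫_{B₀} a u² : u ∈ 𝓓^{1,2}(int B₀) \ {0} }`. -/
def lamStar (N : ℕ) (a : Euc N → ℝ) (B0 : Set (Euc N)) : ℝ :=
  sInf {r | ∃ (u : Euc N → ℝ) (gu : Euc N → Euc N), MemD12 u gu ∧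
    ¬u =ᵐ[volume] (0 : Euc N → ℝ) ∧ (∀ x ∉ interior B0, u x = 0) ∧
    r = (∫ x in B0, ‖gu x‖ ^ 2) / ∫ x in B0, a x * u x ^ 2}

/-- Hypothesis (Hg). -/
def Hg (g : ℝ → ℝ) (β : ℝ) : Prop :=
  Continuous g ∧ (∀ s, 0 ≤ g s) ∧ (∀ s ≤ 0, g s = 0) ∧
    (∃ C : ℝ, ∀ᶠ s in 𝓝[>] (0 : ℝ), g s ≤ C * s ^ (1 + β)) ∧
    Tendsto (fun s => g s / s) atTop atTop

/-- A set has Lipschitz boundary: near each boundary point it is, in suitable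
coordinates, the subgraph of a Lipschitz function over a hyperplane. -/
def HasLipschitzBoundary (s : Set (Euc N)) : Prop :=
  ∀ x ∈ frontier s, ∃ r > (0 : ℝ), ∃ ν : Euc N, ‖ν‖ = 1 ∧
    ∃ (K : NNReal) (φ : Euc N → ℝ), LipschitzWith K φ ∧
      ∀ y ∈ ball x r, (y ∈ s ↔ (inner ℝ y ν : ℝ) ≤ φ (y - (inner ℝ y ν : ℝ) • ν))

/-- Hypothesis (Hb). -/
def Hb (a b : Euc N → ℝ) (β : ℝ) : Prop :=
  Measurable b ∧ (∀ x, 0 ≤ b x) ∧ ¬b =ᵐ[volume] (0 : Euc N → ℝ) ∧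
    (∃ C₁ > (0 : ℝ), ∀ x, b x ≤ C₁ * a x * instanton N x ^ (-β)) ∧
    (volume {x | b x = 0} = 0 ∨
      ({x | b x = 0} = closure (interior {x | b x = 0}) ∧
        HasLipschitzBoundary {x | b x = 0}))

/-- Hypothesis (Hh). -/
def Hh (h : Euc N → ℝ) : Prop :=
  (∀ x, 0 ≤ h x) ∧ ¬h =ᵐ[volume] (0 : Euc N → ℝ) ∧
    ∃ q s : ℝ, (N : ℝ) / 2 < q ∧ (N : ℝ) < s ∧
      MemLp h 1 volume ∧ MemLp h (ENNReal.ofReal q) volume ∧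
      MemLp h (ENNReal.ofReal s) volume ∧
      ∃ C₂ > (0 : ℝ), ∀ R > (0 : ℝ), ∀ r : ℝ, 1 / q + 1 / r = 1 →
        ENNReal.ofReal (R ^ ((N : ℝ) / r)) *
            eLpNorm h (ENNReal.ofReal q) (volume.restrict (ball (0 : Euc N) R)ᶜ) ≤
          ENNReal.ofReal C₂

/-- Hypothesis (Hk): `k` vanishes on `(-∞,0]`, is continuous, nondecreasing,
and `k ς = 1` for the given `ς > 0`. -/
def Hk (k : ℝ → ℝ) (ς : ℝ) : Prop :=
  (∀ s ≤ 0, k s = 0) ∧ Continuous k ∧ Monotone k ∧ 0 < ς ∧ k ς = 1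

/-- `u ∈ C^{1,α}_loc(ℝ^N)`. -/
def MemC1AlphaLoc (u : Euc N → ℝ) (α : NNReal) : Prop :=
  ContDiff ℝ 1 u ∧ ∀ K : Set (Euc N), IsCompact K →
    ∃ C : NNReal, HolderOnWith C α (fderiv ℝ u) K

/-- `G(x,t) = λ a(x) ∫₀ᵗ s k(s/(l d(x))) ds`. -/
def Gfun (a : Euc N → ℝ) (k : ℝ → ℝ) (l lam : ℝ) (x : Euc N) (t : ℝ) : ℝ :=
  lam * a x * ∫ s in (0 : ℝ)..t, s * k (s / (l * instanton N x))

/-- The value of the functional `I_μ` (finite value, meaningful when the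
`G`-term is integrable). -/
def Ifun (a h : Euc N → ℝ) (k : ℝ → ℝ) (l lam μ : ℝ)
    (u : Euc N → ℝ) (gu : Euc N → Euc N) : ℝ :=
  (1 / 2) * (∫ x, ‖gu x‖ ^ 2) - (lam / 2) * (∫ x, a x * max (u x) 0 ^ 2)
    + (∫ x, Gfun a k l lam x (u x)) + μ * ∫ x, h x * u x

/-- The truncated nonlinearity `j_m`. -/
def jmFun (g : ℝ → ℝ) (p : ℝ) (m : ℕ) (s : ℝ) : ℝ :=
  if s ≤ (m : ℝ) then g s else g m - (m : ℝ) ^ p + s ^ p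

/-- `J_m(t) = ∫₀ᵗ j_m`. -/
def JmFun (g : ℝ → ℝ) (p : ℝ) (m : ℕ) (t : ℝ) : ℝ :=
  ∫ s in (0 : ℝ)..t, jmFun g p m s

/-- The Laplacian as the sum of the second partial derivatives. -/
def lap (f : Euc N → ℝ) (x : Euc N) : ℝ :=
  ∑ i : Fin N, fderiv ℝ (fun y => fderiv ℝ f y (EuclideanSpace.single i 1)) x
    (EuclideanSpace.single i 1)

/-- A smooth bounded domain in `ℝ^N`, described as a regular sublevel set. -/
def IsSmoothBoundedDomain (Ω : Set (Euc N)) : Prop :=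
  IsOpen Ω ∧ IsConnected Ω ∧ Bornology.IsBounded Ω ∧
    ∃ f : Euc N → ℝ, ContDiff ℝ (⊤ : ℕ∞) f ∧ Ω = {x | f x < 0} ∧
      ∀ x ∈ frontier Ω, fderiv ℝ f x ≠ 0

/-- `u ∈ 𝓓^{1,2}(Ω) = H¹₀(Ω)`, realised by extension by zero. -/
def MemH01 (Ω : Set (Euc N)) (u : Euc N → ℝ) (gu : Euc N → Euc N) : Prop :=
  MemD12 u gu ∧ ∀ x ∉ Ω, u x = 0

/-- `λ₁` for a domain `Ω`. -/
def lam1On (N : ℕ) (Ω : Set (Euc N)) (a : Euc N → ℝ) : ℝ :=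
  sInf {r | ∃ (u : Euc N → ℝ) (gu : Euc N → Euc N), MemH01 Ω u gu ∧
    ¬u =ᵐ[volume] (0 : Euc N → ℝ) ∧
    r = (∫ x in Ω, ‖gu x‖ ^ 2) / ∫ x in Ω, a x * u x ^ 2}

/-- Weak solution of `-Δu = F` in a domain `Ω` (test functions supported in `Ω`). -/
def IsWeakSolutionOn (Ω : Set (Euc N)) (u : Euc N → ℝ) (gu : Euc N → Euc N)
    (F : Euc N → ℝ) : Prop :=
  ∀ v : Euc N → ℝ, ContDiff ℝ (⊤ : ℕ∞) v → HasCompactSupport v → tsupport v ⊆ Ω →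
    ∫ x in Ω, (inner ℝ (gu x) (gradient v x) : ℝ) = ∫ x in Ω, F x * v x

/-- the truncated infimum nonlinearity `j = inf_{m ≥ 1} j_m` still
satisfies `j(s)/s → +∞` as `s → +∞`. -/
theorem statement9 (g : ℝ → ℝ) (hg0 : ∀ s, 0 ≤ g s)
    (hg : Tendsto (fun s => g s / s) atTop atTop) (p : ℝ) (hp : 1 < p) :
    Tendsto (fun s => (⨅ m : {m : ℕ // 1 ≤ m}, jmFun g p m.1 s) / s) atTop atTop := by
  rw [Filter.tendsto_atTop]
  intro M
  set K := max M 1 with hKdef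
  have hK1 : (1:ℝ) ≤ K := le_max_right _ _
  have hK0 : (0:ℝ) < K := lt_of_lt_of_le one_pos hK1
  have hMK : M ≤ K := le_max_left _ _
  obtain ⟨S₀, hS₀⟩ := Filter.eventually_atTop.mp (hg.eventually (eventually_ge_atTop (2*K)))
  set T := max S₀ 1 with hTdef
  have hT1 : (1:ℝ) ≤ T := le_max_right _ _
  have hgb : ∀ t, T ≤ t → 2*K*t ≤ g t := by
    intro t ht
    have ht0 : (0:ℝ) < t := lt_of_lt_of_le one_pos (le_trans hT1 ht)
    have h := hS₀ t (le_trans (le_max_left _ _) ht)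
    exact (le_div_iff₀ ht0).mp h
  have hc0 : (0:ℝ) < 1 - (1/2:ℝ) ^ p := by
    have : (1/2:ℝ) ^ p < 1 :=
      Real.rpow_lt_one (by norm_num) (by norm_num) (by linarith)
    linarith
  have h2 : Tendsto (fun s : ℝ => s ^ (p-1) * (1 - (1/2:ℝ) ^ p)) atTop atTop :=
    (tendsto_rpow_atTop (by linarith)).atTop_mul_const hc0
  obtain ⟨S₁, hS₁⟩ := Filter.eventually_atTop.mp (h2.eventually (eventually_ge_atTop K))
  filter_upwards [eventually_ge_atTop (2*T), eventually_ge_atTop S₁] with s hs1 hs2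
  have hsT : T ≤ s := by linarith
  have hs0 : (0:ℝ) < s := lt_of_lt_of_le one_pos (le_trans hT1 hsT)
  refine le_trans hMK ?_
  rw [le_div_iff₀ hs0]
  refine le_ciInf ?_
  rintro ⟨m, hm⟩
  have hm1 : (1:ℝ) ≤ (m:ℝ) := by exact_mod_cast hm
  simp only [jmFun]
  split_ifs with h
  · -- s ≤ m : value is g s
    have := hgb s hsT
    nlinarith
  · -- m < s
    push_neg at h
    by_cases hc : s/2 ≤ (m:ℝ)
    · have hmT : T ≤ (m:ℝ) := by linarith
      have hgm := hgb (m:ℝ) hmT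
      have hpow : (m:ℝ) ^ p ≤ s ^ p :=
        Real.rpow_le_rpow (by linarith) h.le (by linarith)
      nlinarith
    · push_neg at hc
      have hKs : K ≤ s ^ (p-1) * (1 - (1/2:ℝ) ^ p) := hS₁ s hs2
      have hsp : s ^ (p-1) * s = s ^ p := by
        rw [Real.rpow_sub_one hs0.ne', div_mul_cancel₀ _ hs0.ne']
      have hhalf : (s/2) ^ p = s ^ p * (1/2:ℝ) ^ p := by
        rw [div_eq_mul_one_div s 2, Real.mul_rpow hs0.le (by norm_num)]
      have hpow : (m:ℝ) ^ p ≤ (s/2) ^ p :=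
        Real.rpow_le_rpow (by linarith) hc.le (by linarith)
      have hgm := hg0 (m:ℝ)
      have hmul : K * s ≤ s ^ (p-1) * (1 - (1/2:ℝ) ^ p) * s :=
        mul_le_mul_of_nonneg_right hKs hs0.le
      nlinarith
end
end

section
/- Assume (Hg), let b : ℝ^N → [0,∞) be measurable and locally bounded, fix p ∈ (1, (N+2)/(N−2)] and an integer m ≥ 1, and define j_m(s) = g(s) for s ≤ m, j_m(s) = g(m) − m^p + s^p for s > m, and J_m(s) = ∫₀^s j_m(t) dt. Let u ∈ 𝓗 with ∫ b J_m(u) < ∞ and let v ∈ 𝓗 have compact support. Then ∫ b J_m(u+tv) < ∞ for every t ∈ ℝ, and the map t ↦ ∫ b J_m(u+tv) is differentiable at t = 0 with derivative ∫ b j_m(u) v. -/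
open MeasureTheory Metric Set Filter Topology

noncomputable section

variable {N : ℕ}

section AuxJm

variable {g : ℝ → ℝ} {p : ℝ} {m : ℕ}

lemma jm_cont (hg : Continuous g) (hp : 0 < p) : Continuous (jmFun g p m) := by
  unfold jmFun
  exact Continuous.if_le hg
    (by fun_prop (disch := positivity))
    continuous_id continuous_const
    (fun s hs => by rw [hs]; ring)

lemma jm_nonneg (hg : ∀ s, 0 ≤ g s) (hp : 0 < p) (s : ℝ) : 0 ≤ jmFun g p m s := by
  unfold jmFun
  split_ifs with h
  · exact hg s
  · push_neg at h
    have hm : (0:ℝ) ≤ m := Nat.cast_nonneg m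
    have h1 : (m:ℝ) ^ p ≤ s ^ p := Real.rpow_le_rpow hm h.le hp.le
    have h2 := hg m
    linarith

lemma jm_growth (hg : Continuous g) (hgzero : ∀ s ≤ (0:ℝ), g s = 0) (hp : 0 < p) :
    ∃ M : ℝ, 0 ≤ M ∧ ∀ s, jmFun g p m s ≤ M + |s| ^ p := by
  obtain ⟨M0, hM0⟩ := (isCompact_Icc (a := (0:ℝ)) (b := m)).exists_bound_of_continuousOn
    hg.continuousOn
  refine ⟨max M0 0, le_max_right _ _, fun s => ?_⟩
  have habs : ∀ t ∈ Icc (0:ℝ) m, g t ≤ max M0 0 := fun t ht =>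
    (le_abs_self _).trans ((hM0 t ht).trans (le_max_left _ _))
  have hsp : (0:ℝ) ≤ |s| ^ p := Real.rpow_nonneg (abs_nonneg s) p
  have hm : (0:ℝ) ≤ m := Nat.cast_nonneg m
  unfold jmFun
  split_ifs with h
  · rcases le_or_gt s 0 with hs | hs
    · rw [hgzero s hs]; positivity
    · have := habs s ⟨hs.le, h⟩
      linarith [le_max_right M0 0]
  · push_neg at h
    have h1 := habs m ⟨hm, le_refl _⟩
    have h2 : (0:ℝ) ≤ (m:ℝ) ^ p := Real.rpow_nonneg hm p
    have h3 : s ^ p = |s| ^ p := by rw [abs_of_pos (lt_of_le_of_lt hm h)]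
    linarith [h3.ge, h3.le]

lemma jm_zero_of_nonpos (hgzero : ∀ s ≤ (0:ℝ), g s = 0) {s : ℝ} (hs : s ≤ 0) :
    jmFun g p m s = 0 := by
  unfold jmFun
  rw [if_pos (hs.trans (Nat.cast_nonneg m)), hgzero s hs]

lemma Jm_hasDerivAt (hcont : Continuous (jmFun g p m)) (t : ℝ) :
    HasDerivAt (JmFun g p m) (jmFun g p m t) t :=
  intervalIntegral.integral_hasDerivAt_right (hcont.intervalIntegrable 0 t)
    (hcont.stronglyMeasurable.stronglyMeasurableAtFilter) hcont.continuousAt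

lemma Jm_zero_of_nonpos (hgzero : ∀ s ≤ (0:ℝ), g s = 0) {t : ℝ} (ht : t ≤ 0) :
    JmFun g p m t = 0 := by
  unfold JmFun
  rw [intervalIntegral.integral_symm]
  rw [intervalIntegral.integral_congr (g := fun _ => (0:ℝ))
    (fun s hs => jm_zero_of_nonpos hgzero (by
      rcases Set.mem_uIcc.1 hs with h | h
      · exact h.2
      · exact h.2.trans ht))]
  simp

lemma Jm_nonneg (hgpos : ∀ s, 0 ≤ g s) (hgzero : ∀ s ≤ (0:ℝ), g s = 0) (hp : 0 < p)
    (hcont : Continuous (jmFun g p m)) (t : ℝ) : 0 ≤ JmFun g p m t := by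
  rcases le_or_gt t 0 with ht | ht
  · rw [Jm_zero_of_nonpos hgzero ht]
  · exact intervalIntegral.integral_nonneg ht.le (fun s _ => jm_nonneg hgpos hp s)

lemma Jm_bound {M : ℝ} (hM : 0 ≤ M) (hgrow : ∀ s, jmFun g p m s ≤ M + |s| ^ p)
    (hgzero : ∀ s ≤ (0:ℝ), g s = 0) (hp : 0 < p)
    (hcont : Continuous (jmFun g p m)) (t : ℝ) :
    JmFun g p m t ≤ M * |t| + |t| ^ (p + 1) := by
  have habs : (0:ℝ) ≤ |t| ^ (p+1) := Real.rpow_nonneg (abs_nonneg t) _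
  rcases le_or_gt t 0 with ht | ht
  · rw [Jm_zero_of_nonpos hgzero ht]
    positivity
  · have habs' : |t| = t := abs_of_pos ht
    have key : JmFun g p m t ≤ ∫ s in (0:ℝ)..t, (M + t ^ p) := by
      apply intervalIntegral.integral_mono_on ht.le (hcont.intervalIntegrable 0 t)
        (intervalIntegrable_const)
      intro s hs
      refine (hgrow s).trans (add_le_add_right ?_ M)
      rw [abs_of_nonneg hs.1]
      exact Real.rpow_le_rpow hs.1 hs.2 hp.le
    rw [intervalIntegral.integral_const, smul_eq_mul] at key
    have : t ^ (p + 1) = t ^ p * t := Real.rpow_add_one ht.ne' p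
    rw [habs']
    nlinarith [key, Real.rpow_nonneg ht.le p]

lemma rpow_mul_self {a p : ℝ} (ha : 0 ≤ a) (hp : 0 < p) : a ^ p * a = a ^ (p + 1) := by
  rcases eq_or_lt_of_le ha with h | h
  · rw [← h, Real.zero_rpow hp.ne', Real.zero_rpow (by positivity : p + 1 ≠ 0), zero_mul]
  · rw [Real.rpow_add_one h.ne' p]

end AuxJm

/-- Lemma (differentiability): for `u ∈ 𝓗` with `∫ b J_m(u) < ∞`
and `v ∈ 𝓗` of compact support, `t ↦ ∫ b J_m(u + t v)` is everywhere finite and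
differentiable at `t = 0` with derivative `∫ b j_m(u) v`. -/
theorem statement11 {N : ℕ} (hN : 3 ≤ N)
    (b : Euc N → ℝ) (g : ℝ → ℝ) (β p : ℝ) (m : ℕ) (hβ : 0 < β)
    (hg : Hg g β) (hbmeas : Measurable b) (hb0 : ∀ x, 0 ≤ b x)
    (hbloc : ∀ K : Set (Euc N), IsCompact K → ∃ C : ℝ, ∀ x ∈ K, b x ≤ C)
    (hp1 : 1 < p) (hp2 : p ≤ ((N : ℝ) + 2) / ((N : ℝ) - 2)) (hm : 1 ≤ m)
    (u v : Euc N → ℝ) (gu gv : Euc N → Euc N)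
    (hu : MemD12 u gu) (hv : MemD12 v gv) (hvsupp : HasCompactSupport v)
    (hfin : Integrable (fun x => b x * JmFun g p m (u x)) volume) :
    (∀ t : ℝ, Integrable (fun x => b x * JmFun g p m (u x + t * v x)) volume) ∧
    HasDerivAt (fun t => ∫ x, b x * JmFun g p m (u x + t * v x))
      (∫ x, b x * jmFun g p m (u x) * v x) 0 := by
  classical
  obtain ⟨hgc, hgpos, hgzero, -, -⟩ := hg
  have hp0 : (0:ℝ) < p := lt_trans one_pos hp1
  have hjc : Continuous (jmFun g p m) := jm_cont hgc hp0
  have hJc : Continuous (JmFun g p m) :=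
    continuous_iff_continuousAt.2 fun t => (Jm_hasDerivAt hjc t).continuousAt
  obtain ⟨M, hM0, hMg⟩ := jm_growth (m := m) hgc hgzero hp0
  set K := tsupport v with hKdef
  have hKc : IsCompact K := hvsupp
  have hKm : MeasurableSet K := hKc.isClosed.measurableSet
  haveI : IsFiniteMeasure (volume.restrict K) :=
    ⟨by rw [Measure.restrict_apply_univ]; exact hKc.measure_lt_top⟩
  obtain ⟨C0, hC0⟩ := hbloc K hKc
  set C := max C0 0 with hCdef
  have hC : ∀ x ∈ K, b x ≤ C := fun x hx => (hC0 x hx).trans (le_max_left _ _)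
  have hCnn : (0:ℝ) ≤ C := le_max_right _ _
  have humeas : AEStronglyMeasurable u volume := hu.1.aestronglyMeasurable
  have hvmeas : AEStronglyMeasurable v volume := hv.1.aestronglyMeasurable
  set q : ENNReal := ENNReal.ofReal (2 * (N:ℝ) / ((N:ℝ) - 2)) with hqdef
  have hN2 : (2:ℝ) < (N:ℝ) := by
    have : (3:ℝ) ≤ (N:ℝ) := by exact_mod_cast hN
    linarith
  have hqr : q.toReal = 2 * (N:ℝ) / ((N:ℝ) - 2) :=
    ENNReal.toReal_ofReal (div_nonneg (by positivity) (by linarith))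
  have hq1 : 1 ≤ q := by
    rw [hqdef]
    rw [ENNReal.one_le_ofReal]
    rw [le_div_iff₀ (by linarith)]
    linarith
  have hq0 : q ≠ 0 := (zero_lt_one.trans_le hq1).ne'
  have hqtop : q ≠ ⊤ := ENNReal.ofReal_ne_top
  have hPle : p + 1 ≤ q.toReal := by
    rw [hqr]
    have hne : (N:ℝ) - 2 ≠ 0 := by linarith
    have he : ((N:ℝ) + 2) / ((N:ℝ) - 2) + 1 = 2 * (N:ℝ) / ((N:ℝ) - 2) := by
      rw [div_add' _ _ _ hne, div_eq_div_iff hne hne]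
      ring
    linarith
  set w : Euc N → ℝ := fun x => ‖u x‖ + ‖v x‖ with hwdef
  have hwnn : ∀ x, 0 ≤ w x := fun x => by positivity
  have hw : MemLp w q volume := hu.1.norm.add hv.1.norm
  have hwmeas : AEStronglyMeasurable w volume := hw.aestronglyMeasurable
  have hwK : IntegrableOn w K volume := (hw.restrict K).integrable hq1
  have hwpow : IntegrableOn (fun x => w x ^ (p + 1)) K volume := by
    have hint : Integrable (fun x => ‖w x‖ ^ q.toReal) volume :=
      hw.integrable_norm_rpow hq0 hqtop
    refine Integrable.mono' ((integrable_const (1:ℝ)).add (hint.restrict (s := K)))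
      (((Real.continuous_rpow_const (by positivity)).comp_aestronglyMeasurable
        hwmeas).restrict) (Filter.Eventually.of_forall fun x => ?_)
    simp only [Pi.add_apply]
    have h1 : (0:ℝ) ≤ w x ^ (p + 1) := Real.rpow_nonneg (hwnn x) _
    rw [Real.norm_eq_abs, abs_of_nonneg h1, Real.norm_eq_abs, abs_of_nonneg (hwnn x)]
    rcases le_or_gt (w x) 1 with h | h
    · have := Real.rpow_le_one (hwnn x) h (by positivity : (0:ℝ) ≤ p + 1)
      have := Real.rpow_nonneg (hwnn x) q.toReal
      linarith
    · have := Real.rpow_le_rpow_of_exponent_le h.le hPle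
      linarith
  -- pointwise bounds
  have habsle : ∀ (t : ℝ) x, |u x + t * v x| ≤ (1 + |t|) * w x := by
    intro t x
    have h1 : |u x + t * v x| ≤ |u x| + |t| * |v x| := by
      calc |u x + t * v x| ≤ |u x| + |t * v x| := abs_add_le _ _
      _ = |u x| + |t| * |v x| := by rw [abs_mul]
    have h2 : |u x| = ‖u x‖ := (Real.norm_eq_abs _).symm
    have h3 : |v x| = ‖v x‖ := (Real.norm_eq_abs _).symm
    rw [h2, h3] at h1
    have h4 : (0:ℝ) ≤ ‖v x‖ := norm_nonneg _
    have h5 : (0:ℝ) ≤ ‖u x‖ := norm_nonneg _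
    have h6 : (0:ℝ) ≤ |t| := abs_nonneg t
    show |u x + t * v x| ≤ (1 + |t|) * (‖u x‖ + ‖v x‖)
    nlinarith
  have hJb : ∀ (t : ℝ) x, JmFun g p m (u x + t * v x) ≤
      M * ((1 + |t|) * w x) + ((1 + |t|) * w x) ^ (p + 1) := by
    intro t x
    refine (Jm_bound hM0 hMg hgzero hp0 hjc _).trans (add_le_add ?_ ?_)
    · exact mul_le_mul_of_nonneg_left (habsle t x) hM0
    · exact Real.rpow_le_rpow (abs_nonneg _) (habsle t x) (by positivity)
  have hgb_int : ∀ t : ℝ, IntegrableOn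
      (fun x => C * (M * ((1 + |t|) * w x) + ((1 + |t|) * w x) ^ (p + 1))) K volume := by
    intro t
    have hbase := ((hwK.const_mul (M * (1 + |t|))).add
      (hwpow.const_mul ((1 + |t|) ^ (p + 1)))).const_mul C
    refine hbase.congr (Filter.Eventually.of_forall fun x => ?_)
    simp only [Pi.add_apply]
    rw [Real.mul_rpow (by positivity) (hwnn x)]
    ring
  have hfmeas : ∀ t : ℝ, AEStronglyMeasurable
      (fun x => b x * JmFun g p m (u x + t * v x)) volume := fun t =>
    hbmeas.aestronglyMeasurable.mul (hJc.comp_aestronglyMeasurable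
      (humeas.add (hvmeas.const_mul t)))
  have hfnn : ∀ (t : ℝ) x, 0 ≤ b x * JmFun g p m (u x + t * v x) := fun t x =>
    mul_nonneg (hb0 x) (Jm_nonneg hgpos hgzero hp0 hjc _)
  have hInt : ∀ t : ℝ, Integrable
      (fun x => b x * JmFun g p m (u x + t * v x)) volume := by
    intro t
    have hdiffint : Integrable (K.indicator
        (fun x => b x * JmFun g p m (u x + t * v x) - b x * JmFun g p m (u x))) volume := by
      rw [integrable_indicator_iff hKm]
      refine Integrable.mono' ((hgb_int t).add (hfin.integrableOn.abs))
        (((hfmeas t).sub hfin.aestronglyMeasurable).restrict)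
        ((ae_restrict_iff' hKm).2 (Filter.Eventually.of_forall fun x hx => ?_))
      have h1 : b x * JmFun g p m (u x + t * v x) ≤
          C * (M * ((1 + |t|) * w x) + ((1 + |t|) * w x) ^ (p + 1)) :=
        mul_le_mul (hC x hx) (hJb t x) (Jm_nonneg hgpos hgzero hp0 hjc _) hCnn
      have h2 := hfnn t x
      calc ‖b x * JmFun g p m (u x + t * v x) - b x * JmFun g p m (u x)‖
          ≤ ‖b x * JmFun g p m (u x + t * v x)‖ + ‖b x * JmFun g p m (u x)‖ :=
            norm_sub_le _ _
        _ ≤ C * (M * ((1 + |t|) * w x) + ((1 + |t|) * w x) ^ (p + 1))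
            + |b x * JmFun g p m (u x)| := by
            rw [Real.norm_eq_abs, Real.norm_eq_abs, abs_of_nonneg h2]
            exact add_le_add h1 (le_refl _)
    have heq : (fun x => b x * JmFun g p m (u x + t * v x)) =
        fun x => b x * JmFun g p m (u x) + K.indicator
          (fun x => b x * JmFun g p m (u x + t * v x) - b x * JmFun g p m (u x)) x := by
      funext x
      by_cases hx : x ∈ K
      · rw [Set.indicator_of_mem hx]; ring
      · rw [Set.indicator_of_notMem hx, image_eq_zero_of_notMem_tsupport hx]
        simp
    rw [heq]
    exact hfin.add hdiffint
  refine ⟨hInt, ?_⟩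
  -- derivative
  set bnd : Euc N → ℝ := fun x => C * ((M + (2 * w x) ^ p) * ‖v x‖) with hbnddef
  have hbnd_int : Integrable bnd volume := by
    have hind : bnd = K.indicator bnd := by
      funext x
      by_cases hx : x ∈ K
      · rw [Set.indicator_of_mem hx]
      · rw [Set.indicator_of_notMem hx, hbnddef]
        simp [image_eq_zero_of_notMem_tsupport hx]
    rw [hind, integrable_indicator_iff hKm]
    refine Integrable.mono' (((hwK.const_mul M).add
        (hwpow.const_mul (2 ^ p))).const_mul C)
      ((((aestronglyMeasurable_const).add
        ((Real.continuous_rpow_const hp0.le).comp_aestronglyMeasurable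
          (hwmeas.const_mul 2))).mul hvmeas.norm).const_mul C).restrict
      (Filter.Eventually.of_forall fun x => ?_)
    have h2w : (2 * w x) ^ p = 2 ^ p * w x ^ p :=
      Real.mul_rpow (by norm_num) (hwnn x)
    have hvw : ‖v x‖ ≤ w x := le_add_of_nonneg_left (norm_nonneg _)
    have hbnn : (0:ℝ) ≤ bnd x := by
      rw [hbnddef]
      positivity
    rw [Real.norm_eq_abs, abs_of_nonneg hbnn, hbnddef]
    have h1 : (M + (2 * w x) ^ p) * ‖v x‖ ≤ (M + 2 ^ p * w x ^ p) * w x := by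
      rw [h2w]
      exact mul_le_mul (le_refl _) hvw (norm_nonneg _)
        (by positivity)
    have h2 : (M + 2 ^ p * w x ^ p) * w x = M * w x + 2 ^ p * w x ^ (p + 1) := by
      rw [← rpow_mul_self (hwnn x) hp0]
      ring
    rw [h2] at h1
    exact mul_le_mul_of_nonneg_left h1 hCnn
  have key := hasDerivAt_integral_of_dominated_loc_of_deriv_le
    (μ := volume) (x₀ := (0:ℝ)) (s := ball (0:ℝ) 1)
    (F := fun t x => b x * JmFun g p m (u x + t * v x))
    (F' := fun t x => b x * jmFun g p m (u x + t * v x) * v x)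
    (bound := bnd) (ball_mem_nhds _ one_pos)
    (Filter.Eventually.of_forall hfmeas) (hInt 0)
    ((hbmeas.aestronglyMeasurable.mul (hjc.comp_aestronglyMeasurable
      (humeas.add (hvmeas.const_mul 0)))).mul hvmeas)
    (Filter.Eventually.of_forall fun x => ?_)
    hbnd_int
    (Filter.Eventually.of_forall fun x => ?_)
  · have := key.2
    simpa only [zero_mul, add_zero] using this
  · -- bound
    intro t ht
    rw [mem_ball_iff_norm, sub_zero, Real.norm_eq_abs] at ht
    show ‖b x * jmFun g p m (u x + t * v x) * v x‖ ≤ bnd x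
    by_cases hx : x ∈ K
    · have hjmnn := jm_nonneg (m := m) (p := p) hgpos hp0 (u x + t * v x)
      have hle2w : |u x + t * v x| ≤ 2 * w x := by
        have h1 := habsle t x
        have h2 : (1 + |t|) * w x ≤ 2 * w x :=
          mul_le_mul_of_nonneg_right (by linarith) (hwnn x)
        linarith
      have hjmle : jmFun g p m (u x + t * v x) ≤ M + (2 * w x) ^ p :=
        (hMg _).trans (add_le_add (le_refl _)
          (Real.rpow_le_rpow (abs_nonneg _) hle2w hp0.le))
      calc ‖b x * jmFun g p m (u x + t * v x) * v x‖
          = b x * jmFun g p m (u x + t * v x) * ‖v x‖ := by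
            rw [norm_mul, norm_mul, Real.norm_eq_abs (b x), abs_of_nonneg (hb0 x),
              Real.norm_eq_abs (jmFun g p m _), abs_of_nonneg hjmnn]
        _ ≤ C * (M + (2 * w x) ^ p) * ‖v x‖ := by
            refine mul_le_mul_of_nonneg_right ?_ (norm_nonneg _)
            exact mul_le_mul (hC x hx) hjmle hjmnn hCnn
        _ = bnd x := by rw [hbnddef]; ring
    · have hv0 : v x = 0 := image_eq_zero_of_notMem_tsupport hx
      rw [hv0, hbnddef]
      simp [hv0]
  · -- differentiability
    intro t ht
    have h1 : HasDerivAt (fun s : ℝ => u x + s * v x) (v x) t :=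
      (hasDerivAt_mul_const (v x)).const_add (u x)
    have h2 := (Jm_hasDerivAt hjc (u x + t * v x)).comp t h1
    have h3 := h2.const_mul (b x)
    simp only [Function.comp_def] at h3
    exact h3.congr_deriv (by ring)
end
end
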